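/- arXiv:2407.15765 — 5 statements merged into one kernel-verified Lean document; each statement's English description precedes it below -/
import Mathlib

section
/- Let (B,F) be a display map category with F-dependent coproducts, and let p: E → B be a fibration with fibred coproducts along F. Then p is a dependent Hilbert ε-fibration (i.e., every object of p is (F,∐)-quantifier-free) if and only if for every object α ∈ E_I and every display map f: I ↠ J in F there uniquely exist an arrow ε_{α,f}: J → I in B and a vertical map ε̄_{α,f}: ∐_f α → (ε_{α,f})*α such that: (1) f ∘ ε_{α,f} = id_J; (2) id = (ε_{α,f})*(η_α) ∘ ε̄_{α,f}, where η: id ⇒ f* ∐_f is the unit of the adjunction ∐_f ⊣ f*; and (3) whenever a vertical arrow u: α → ∐_g β decomposes as u = t*(η_β) ∘ h for some vertical arrow h and some section t of g, then t = ε_{β,g} and h = ε̄_{β,g} ∘ u. -/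
open CategoryTheory CategoryTheory.Limits

universe w₂ w₁ v u

namespace Dial

variable {B : Type u} [Category.{v} B]

/-- A display map category structure: a class of maps `F` together with chosen pullbacks of
`F`-maps along arbitrary maps, such that `F` is stable under pullback. -/
structure DisplayStruct (B : Type u) [Category.{v} B] where
  F : MorphismProperty B
  pbObj : ∀ {X Z Y : B} (f : X ⟶ Y) (g : Z ⟶ Y), F f → B
  pbFst : ∀ {X Z Y : B} (f : X ⟶ Y) (g : Z ⟶ Y) (hf : F f), pbObj f g hf ⟶ X
  pbSnd : ∀ {X Z Y : B} (f : X ⟶ Y) (g : Z ⟶ Y) (hf : F f), pbObj f g hf ⟶ Z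
  isPb : ∀ {X Z Y : B} (f : X ⟶ Y) (g : Z ⟶ Y) (hf : F f),
    IsPullback (pbFst f g hf) (pbSnd f g hf) f g
  stable : ∀ {W X Z Y : B} {p₁ : W ⟶ X} {p₂ : W ⟶ Z} {f : X ⟶ Y} {g : Z ⟶ Y},
    IsPullback p₁ p₂ f g → F f → F p₂

/-- `(B, F)` has units: all isomorphisms are display maps. -/
def DisplayStruct.HasUnits (D : DisplayStruct B) : Prop :=
  ∀ {X Y : B} (f : X ⟶ Y), IsIso f → D.F f

/-- `(B, F)` has `F`-dependent coproducts: `F` is closed under composition. -/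
def DisplayStruct.HasDepCoproducts (D : DisplayStruct B) : Prop :=
  ∀ {X Y Z : B} (f : X ⟶ Y) (g : Y ⟶ Z), D.F f → D.F g → D.F (f ≫ g)

/-- The data `(h : E ⟶ J, pullback square (zI, zE) over (g, h), e : Z ⟶ K over I)` is an
`F`-dependent product of `f : K ⟶ I` along `g : I ⟶ J`. -/
def IsDepProdCone (D : DisplayStruct B) {K I J E Z : B} (f : K ⟶ I) (g : I ⟶ J)
    (h : E ⟶ J) (zI : Z ⟶ I) (zE : Z ⟶ E) (e : Z ⟶ K) : Prop :=
  IsPullback zI zE g h ∧ e ≫ f = zI ∧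
  ∀ {E' Z' : B} (h' : E' ⟶ J), D.F h' → ∀ (zI' : Z' ⟶ I) (zE' : Z' ⟶ E') (e' : Z' ⟶ K),
    IsPullback zI' zE' g h' → e' ≫ f = zI' →
    ∃! kw : (E' ⟶ E) × (Z' ⟶ Z),
      kw.1 ≫ h = h' ∧ kw.2 ≫ zI = zI' ∧ kw.2 ≫ zE = zE' ≫ kw.1 ∧ kw.2 ≫ e = e'

/-- `(B, F)` has `F`-dependent products. -/
def DisplayStruct.HasDepProds (D : DisplayStruct B) : Prop :=
  ∀ {K I J : B} (f : K ⟶ I) (g : I ⟶ J), D.F f → D.F g →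
    ∃ (E : B) (h : E ⟶ J) (_ : D.F h) (Z : B) (zI : Z ⟶ I) (zE : Z ⟶ E) (e : Z ⟶ K),
      IsDepProdCone D f g h zI zE e

/-- A cloven Grothendieck fibration over `B`, presented as an indexed category:
fibre categories together with reindexing functors and comparison isomorphisms. -/
structure IndexedCat (B : Type u) [Category.{v} B] where
  Fib : B → Cat.{w₂, w₁}
  reindex : ∀ {I J : B}, (I ⟶ J) → (Fib J ⥤ Fib I)
  reindexId : ∀ I : B, reindex (𝟙 I) ≅ 𝟭 (Fib I)
  reindexComp : ∀ {I J K : B} (f : I ⟶ J) (g : J ⟶ K),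
    reindex (f ≫ g) ≅ reindex g ⋙ reindex f

/-- The canonical Beck–Chevalley comparison map `∐_t l* ξ ⟶ r* ∐_b ξ` associated to a
commutative square `t ≫ r = l ≫ b` and left adjoints to reindexing along `t` and `b`. -/
def coprodBCmap (p : IndexedCat.{w₂, w₁} B) {K I L J : B}
    {t : K ⟶ I} {l : K ⟶ L} {r : I ⟶ J} {b : L ⟶ J}
    (sq : t ≫ r = l ≫ b) {St : p.Fib K ⥤ p.Fib I} {Sb : p.Fib L ⥤ p.Fib J}
    (adjt : St ⊣ p.reindex t) (adjb : Sb ⊣ p.reindex b) (ξ : p.Fib L) :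
    St.obj ((p.reindex l).obj ξ) ⟶ (p.reindex r).obj (Sb.obj ξ) :=
  (adjt.homEquiv _ _).symm
    ((p.reindex l).map (adjb.unit.app ξ) ≫ (p.reindexComp l b).inv.app (Sb.obj ξ) ≫
      eqToHom (by rw [sq]) ≫ (p.reindexComp t r).hom.app (Sb.obj ξ))

/-- The canonical Beck–Chevalley comparison map `r* ∏_b ξ ⟶ ∏_t l* ξ` associated to a
commutative square `t ≫ r = l ≫ b` and right adjoints to reindexing along `t` and `b`. -/
def prodBCmap (p : IndexedCat.{w₂, w₁} B) {K I L J : B}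
    {t : K ⟶ I} {l : K ⟶ L} {r : I ⟶ J} {b : L ⟶ J}
    (sq : t ≫ r = l ≫ b) {Pt : p.Fib K ⥤ p.Fib I} {Pb : p.Fib L ⥤ p.Fib J}
    (adjt : p.reindex t ⊣ Pt) (adjb : p.reindex b ⊣ Pb) (ξ : p.Fib L) :
    (p.reindex r).obj (Pb.obj ξ) ⟶ Pt.obj ((p.reindex l).obj ξ) :=
  (adjt.homEquiv _ _)
    ((p.reindexComp t r).inv.app (Pb.obj ξ) ≫ eqToHom (by rw [sq]) ≫
      (p.reindexComp l b).hom.app (Pb.obj ξ) ≫ (p.reindex l).map (adjb.counit.app ξ))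

/-- Fibred coproducts along the display maps `F`: left adjoints to reindexing along every
map of `F`, satisfying the Beck–Chevalley condition for every pullback square of the
appropriate shape. -/
structure FCoproducts (D : DisplayStruct B) (p : IndexedCat.{w₂, w₁} B) where
  Sig : ∀ {I J : B} (u : I ⟶ J), D.F u → (p.Fib I ⥤ p.Fib J)
  adj : ∀ {I J : B} (u : I ⟶ J) (hu : D.F u), Sig u hu ⊣ p.reindex u
  bcc : ∀ {K I L J : B} (t : K ⟶ I) (l : K ⟶ L) (r : I ⟶ J) (b : L ⟶ J)
    (ht : D.F t) (hb : D.F b) (sq : IsPullback t l r b) (ξ : p.Fib L),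
    IsIso (coprodBCmap p sq.w (adj t ht) (adj b hb) ξ)

/-- Fibred products along the display maps `F`. -/
structure FProducts (D : DisplayStruct B) (p : IndexedCat.{w₂, w₁} B) where
  Pi : ∀ {I J : B} (u : I ⟶ J), D.F u → (p.Fib I ⥤ p.Fib J)
  adj : ∀ {I J : B} (u : I ⟶ J) (hu : D.F u), p.reindex u ⊣ Pi u hu
  bcc : ∀ {K I L J : B} (t : K ⟶ I) (l : K ⟶ L) (r : I ⟶ J) (b : L ⟶ J)
    (ht : D.F t) (hb : D.F b) (sq : IsPullback t l r b) (ξ : p.Fib L),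
    IsIso (prodBCmap p sq.w (adj t ht) (adj b hb) ξ)

/-- Given a section `g` of `u : A' ⟶ A` and `β` in the fibre over `A'`, the canonical map
`g* β ⟶ ∐_u β` obtained by reindexing the unit of `∐_u ⊣ u*` along `g` (composed with the
canonical isomorphism `g* u* ≅ id`). -/
def unitSec (p : IndexedCat.{w₂, w₁} B) {D : DisplayStruct B} (C : FCoproducts D p)
    {A A' : B} (u : A' ⟶ A) (hu : D.F u) (g : A ⟶ A') (hg : g ≫ u = 𝟙 A) (β : p.Fib A') :
    (p.reindex g).obj β ⟶ (C.Sig u hu).obj β :=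
  (p.reindex g).map ((C.adj u hu).unit.app β) ≫
    (p.reindexComp g u).inv.app ((C.Sig u hu).obj β) ≫
    eqToHom (by rw [hg]) ≫ (p.reindexId A).hom.app ((C.Sig u hu).obj β)

/-- Given a section `g` of `u : A' ⟶ A` and `β` in the fibre over `A'`, the canonical map
`∏_u β ⟶ g* β` obtained by reindexing the counit of `u* ⊣ ∏_u` along `g`. -/
def counitSec (p : IndexedCat.{w₂, w₁} B) {D : DisplayStruct B} (P : FProducts D p)
    {A A' : B} (u : A' ⟶ A) (hu : D.F u) (g : A ⟶ A') (hg : g ≫ u = 𝟙 A) (β : p.Fib A') :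
    (P.Pi u hu).obj β ⟶ (p.reindex g).obj β :=
  (p.reindexId A).inv.app ((P.Pi u hu).obj β) ≫ eqToHom (by rw [hg]) ≫
    (p.reindexComp g u).hom.app ((P.Pi u hu).obj β) ≫
    (p.reindex g).map ((P.adj u hu).counit.app β)

/-- `α` in the fibre over `A` is `(F, ∐)`-quantifier splitting: every vertical map
`α ⟶ ∐_u β` for `u : A' ⟶ A` in `F` factors through the reindexed unit along a unique
section of `u`, via a unique vertical map. -/
def IsCoprodSplitting {D : DisplayStruct B} (p : IndexedCat.{w₂, w₁} B)
    (C : FCoproducts D p) {A : B} (α : p.Fib A) : Prop :=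
  ∀ {A' : B} (u : A' ⟶ A) (hu : D.F u) (β : p.Fib A') (h : α ⟶ (C.Sig u hu).obj β),
    ∃! gh : Σ' (g : A ⟶ A') (hg : g ≫ u = 𝟙 A), (α ⟶ (p.reindex g).obj β),
      h = gh.2.2 ≫ unitSec p C u hu gh.1 gh.2.1 β

/-- `α` is `(F, ∐)`-quantifier-free: all of its reindexings are quantifier splitting. -/
def IsCoprodFree {D : DisplayStruct B} (p : IndexedCat.{w₂, w₁} B)
    (C : FCoproducts D p) {A : B} (α : p.Fib A) : Prop :=
  ∀ {I : B} (f : I ⟶ A), IsCoprodSplitting p C ((p.reindex f).obj α)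

/-- `p` has enough `(F, ∐)`-quantifier-free objects. -/
def HasEnoughCoprodFree {D : DisplayStruct B} (p : IndexedCat.{w₂, w₁} B)
    (C : FCoproducts D p) : Prop :=
  ∀ {I : B} (α : p.Fib I), ∃ (A : B) (f : A ⟶ I) (hf : D.F f) (β : p.Fib A),
    IsCoprodFree p C β ∧ Nonempty (α ≅ (C.Sig f hf).obj β)

/-- `α` in the fibre over `A` is `(F, ∏)`-quantifier splitting: every vertical map
`∏_u β ⟶ α` for `u : A' ⟶ A` in `F` factors through the reindexed counit along a unique
section of `u`, via a unique vertical map. -/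
def IsProdSplitting {D : DisplayStruct B} (p : IndexedCat.{w₂, w₁} B)
    (P : FProducts D p) {A : B} (α : p.Fib A) : Prop :=
  ∀ {A' : B} (u : A' ⟶ A) (hu : D.F u) (β : p.Fib A') (h : (P.Pi u hu).obj β ⟶ α),
    ∃! gh : Σ' (g : A ⟶ A') (hg : g ≫ u = 𝟙 A), ((p.reindex g).obj β ⟶ α),
      h = counitSec p P u hu gh.1 gh.2.1 β ≫ gh.2.2

/-- `α` is `(F, ∏)`-quantifier-free. -/
def IsProdFree {D : DisplayStruct B} (p : IndexedCat.{w₂, w₁} B)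
    (P : FProducts D p) {A : B} (α : p.Fib A) : Prop :=
  ∀ {I : B} (f : I ⟶ A), IsProdSplitting p P ((p.reindex f).obj α)

/-- `p` has enough `(F, ∏)`-quantifier-free objects. -/
def HasEnoughProdFree {D : DisplayStruct B} (p : IndexedCat.{w₂, w₁} B)
    (P : FProducts D p) : Prop :=
  ∀ {I : B} (α : p.Fib I), ∃ (A : B) (f : A ⟶ I) (hf : D.F f) (β : p.Fib A),
    IsProdFree p P β ∧ Nonempty (α ≅ (P.Pi f hf).obj β)

/-- Relative `(F, ∏)`-quantifier splitting, where the objects `β` are restricted to a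
full subfibration cut out by the predicate `S` (e.g. the `(F, ∐)`-quantifier-free part). -/
def IsProdSplittingRel {D : DisplayStruct B} (p : IndexedCat.{w₂, w₁} B)
    (P : FProducts D p) (S : ∀ ⦃I : B⦄, p.Fib I → Prop) {A : B} (α : p.Fib A) : Prop :=
  ∀ {A' : B} (u : A' ⟶ A) (hu : D.F u) (β : p.Fib A'), S β →
    ∀ (h : (P.Pi u hu).obj β ⟶ α),
    ∃! gh : Σ' (g : A ⟶ A') (hg : g ≫ u = 𝟙 A), ((p.reindex g).obj β ⟶ α),
      h = counitSec p P u hu gh.1 gh.2.1 β ≫ gh.2.2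

/-- Relative `(F, ∏)`-quantifier-freeness in the full subfibration cut out by `S`. -/
def IsProdFreeRel {D : DisplayStruct B} (p : IndexedCat.{w₂, w₁} B)
    (P : FProducts D p) (S : ∀ ⦃I : B⦄, p.Fib I → Prop) {A : B} (α : p.Fib A) : Prop :=
  ∀ {I : B} (f : I ⟶ A), IsProdSplittingRel p P S ((p.reindex f).obj α)
/-- A family of Hilbert ε-data: for every `α` over `I` and display map `f : I ⟶ J`,
a section `ε` of `f` together with a vertical map `∐_f α ⟶ ε* α`. -/
def EpsFamily (D : DisplayStruct B) (p : IndexedCat.{w₂, w₁} B) (C : FCoproducts D p) :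
    Type _ :=
  ∀ (I J : B) (f : I ⟶ J) (hf : D.F f) (α : p.Fib I),
    Σ' (s : J ⟶ I) (_ : s ≫ f = 𝟙 J), ((C.Sig f hf).obj α ⟶ (p.reindex s).obj α)

/-- The conditions (2) and (3) of the characterisation of Hilbert ε-fibrations
(condition (1), `ε ≫ f = 𝟙`, is built into `EpsFamily`). -/
def IsGoodEps {D : DisplayStruct B} {p : IndexedCat.{w₂, w₁} B} {C : FCoproducts D p}
    (E : EpsFamily D p C) : Prop :=
  (∀ (I J : B) (f : I ⟶ J) (hf : D.F f) (α : p.Fib I),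
    (E I J f hf α).2.2 ≫ unitSec p C f hf (E I J f hf α).1 (E I J f hf α).2.1 α = 𝟙 _) ∧
  (∀ (I' A : B) (g : A ⟶ I') (hg : D.F g) (β : p.Fib A) (α' : p.Fib I')
    (u : α' ⟶ (C.Sig g hg).obj β) (t : I' ⟶ A) (ht : t ≫ g = 𝟙 I')
    (h : α' ⟶ (p.reindex t).obj β),
    u = h ≫ unitSec p C g hg t ht β →
      ∃ hte : t = (E A I' g hg β).1,
        h = u ≫ (E A I' g hg β).2.2 ≫ eqToHom (by rw [hte]))

private theorem sig_snd_heq {G : Sort*} {P : G → Prop} {T : G → Sort*}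
    {x y : Σ' (g : G) (_ : P g), T g} (h : x = y) : HEq x.2.2 y.2.2 := by
  cases h; rfl

private theorem sig_ext {G : Sort*} {P : G → Prop} {T : G → Sort*}
    {x y : Σ' (g : G) (_ : P g), T g} (h1 : x.1 = y.1) (h2 : HEq x.2.2 y.2.2) : x = y := by
  obtain ⟨a, b, c⟩ := x
  obtain ⟨a', b', c'⟩ := y
  dsimp at h1 h2
  subst h1
  cases h2
  rfl

/-- Quantifier-splitting is invariant under vertical isomorphism. -/
lemma splitting_of_iso {D : DisplayStruct B} (p : IndexedCat.{w₂, w₁} B)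
    (C : FCoproducts D p) {A : B} {α α' : p.Fib A} (e : α ≅ α')
    (hs : IsCoprodSplitting p C α') : IsCoprodSplitting p C α := by
  intro A' u hu β h
  obtain ⟨gh, hgh, huniq⟩ := hs u hu β (e.inv ≫ h)
  obtain ⟨g, hg, m⟩ := gh
  refine ⟨⟨g, hg, e.hom ≫ m⟩, ?_, ?_⟩
  · have : e.hom ≫ e.inv ≫ h = e.hom ≫ m ≫ unitSec p C u hu g hg β := by rw [hgh]
    simpa using this
  · rintro ⟨t, ht, k⟩ hk
    have h2 : (⟨t, ht, e.inv ≫ k⟩ : Σ' (g : A ⟶ A') (hg : g ≫ u = 𝟙 A),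
        (α' ⟶ (p.reindex g).obj β)) = ⟨g, hg, m⟩ := by
      apply huniq
      dsimp only
      rw [Category.assoc, ← hk]
    have h1 : t = g := congrArg (fun x => x.1) h2
    subst h1
    have h3 := sig_snd_heq h2
    dsimp only at h3
    exact sig_ext rfl (heq_of_eq (by rw [← eq_of_heq h3]; simp))

/-- A fibration with fibred coproducts along `F` (over a display map category
with `F`-dependent coproducts) is a dependent Hilbert ε-fibration, i.e. every object is
`(F, ∐)`-quantifier-free, if and only if there is a unique family of Hilbert ε-operators
satisfying conditions (1), (2) and (3). -/
theorem hilbert_epsilon_characterisation (D : DisplayStruct B) (hco : D.HasDepCoproducts)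
    (p : IndexedCat.{w₂, w₁} B) (C : FCoproducts D p) :
    (∀ (I : B) (α : p.Fib I), IsCoprodFree p C α) ↔ ∃! E : EpsFamily D p C, IsGoodEps E := by
  classical
  constructor
  · intro H
    have allSplit : ∀ {A : B} (α : p.Fib A), IsCoprodSplitting p C α := by
      intro A α
      exact splitting_of_iso p C ((p.reindexId A).app α).symm (H A α (𝟙 A))
    have W : ∀ (I J : B) (f : I ⟶ J) (hf : D.F f) (α : p.Fib I),
        ∃! gh : Σ' (g : J ⟶ I) (hg : g ≫ f = 𝟙 J),
            ((C.Sig f hf).obj α ⟶ (p.reindex g).obj α),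
          𝟙 ((C.Sig f hf).obj α) = gh.2.2 ≫ unitSec p C f hf gh.1 gh.2.1 α :=
      fun I J f hf α => allSplit ((C.Sig f hf).obj α) f hf α (𝟙 _)
    refine ⟨fun I J f hf α => (W I J f hf α).choose, ⟨?_, ?_⟩, ?_⟩
    · intro I J f hf α
      exact ((W I J f hf α).choose_spec.1).symm
    · intro I' A g hg β α' u t ht h hu
      have S := allSplit α' g hg β u
      have h2 : u = (⟨(W A I' g hg β).choose.1, (W A I' g hg β).choose.2.1,
          u ≫ (W A I' g hg β).choose.2.2⟩ : Σ' (s : I' ⟶ A) (_ : s ≫ g = 𝟙 I'),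
            (α' ⟶ (p.reindex s).obj β)).2.2 ≫ unitSec p C g hg (W A I' g hg β).choose.1
              (W A I' g hg β).choose.2.1 β := by
        dsimp only
        rw [Category.assoc, ← (W A I' g hg β).choose_spec.1, Category.comp_id]
      have heq := S.unique (y₁ := ⟨t, ht, h⟩) hu h2
      have hte : t = (W A I' g hg β).choose.1 := congrArg (fun x => x.1) heq
      subst hte
      refine ⟨rfl, ?_⟩
      have h3 := sig_snd_heq heq
      dsimp only at h3
      rw [eq_of_heq h3]
      simp
    · intro E' hE'
      funext I J f hf α
      exact (W I J f hf α).unique (hE'.1 I J f hf α).symm ((W I J f hf α).choose_spec.1)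
  · rintro ⟨E, hE, -⟩ I α I₂ f A' u hu β h
    refine ⟨⟨(E A' I₂ u hu β).1, (E A' I₂ u hu β).2.1, h ≫ (E A' I₂ u hu β).2.2⟩, ?_, ?_⟩
    · dsimp only
      rw [Category.assoc, hE.1 A' I₂ u hu β, Category.comp_id]
    · rintro ⟨t, ht, k⟩ hk
      obtain ⟨hte, hk2⟩ := hE.2 I₂ A' u hu β ((p.reindex f).obj α) h t ht k hk
      subst hte
      exact sig_ext rfl (heq_of_eq (by rw [hk2]; simp))
end Dial
end

section
/- Let (B,F) be a display map category with F-dependent coproducts and p: E → B a dependent Hilbert ε-fibration. Then for every object α ∈ E_I and every display map f: I ↠ J in F, the vertical arrow ε̄_{α,f}: ∐_f α → (ε_{α,f})*α (provided by the characterisation of Hilbert ε-fibrations) exists and is an isomorphism; in particular ∐_f α ≅ (ε_{α,f})*α. -/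
open CategoryTheory CategoryTheory.Limits

universe w₂ w₁ v u

namespace Dial

variable {B : Type u} [Category.{v} B]

/-- STATEMENT 6: In a dependent Hilbert ε-fibration, for every `α` over `I` and display map
`f : I ⟶ J` the (unique) Hilbert ε-data `(ε, ε̄)` exists and `ε̄ : ∐_f α ⟶ ε* α` is an
isomorphism. -/
theorem hilbert_epsilon_bar_isIso (D : DisplayStruct B) (hco : D.HasDepCoproducts)
    (p : IndexedCat.{w₂, w₁} B) (C : FCoproducts D p)
    (heps : ∀ (I : B) (α : p.Fib I), IsCoprodFree p C α) :
    ∀ (I J : B) (f : I ⟶ J) (hf : D.F f) (α : p.Fib I),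
      (∃ (s : J ⟶ I) (hs : s ≫ f = 𝟙 J)
        (bar : (C.Sig f hf).obj α ⟶ (p.reindex s).obj α),
          bar ≫ unitSec p C f hf s hs α = 𝟙 _) ∧
      (∀ (s : J ⟶ I) (hs : s ≫ f = 𝟙 J)
        (bar : (C.Sig f hf).obj α ⟶ (p.reindex s).obj α),
          bar ≫ unitSec p C f hf s hs α = 𝟙 _ → IsIso bar) := by
  intro I J f hf α
  constructor
  · obtain ⟨⟨s, hs, k⟩, hk, -⟩ :=
      heps J ((C.Sig f hf).obj α) (𝟙 J) f hf α
        ((p.reindexId J).hom.app ((C.Sig f hf).obj α))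
    refine ⟨s, hs, (p.reindexId J).inv.app _ ≫ k, ?_⟩
    rw [Category.assoc, ← hk]
    simp
  · intro s hs bar hbar
    obtain ⟨w, hw, huniq⟩ :=
      heps I α s f hf α (unitSec p C f hf s hs α)
    have h1 : (⟨s, hs, 𝟙 _⟩ : Σ' (g : J ⟶ I) (_ : g ≫ f = 𝟙 J),
        ((p.reindex s).obj α ⟶ (p.reindex g).obj α)) = w := by
      apply huniq
      simp
    have h2 : (⟨s, hs, unitSec p C f hf s hs α ≫ bar⟩ :
        Σ' (g : J ⟶ I) (_ : g ≫ f = 𝟙 J),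
        ((p.reindex s).obj α ⟶ (p.reindex g).obj α)) = w := by
      apply huniq
      rw [Category.assoc, hbar, Category.comp_id]
    have h3 := h1.trans h2.symm
    simp only [PSigma.mk.injEq, heq_eq_eq, true_and] at h3
    exact ⟨unitSec p C f hf s hs α, hbar, h3.symm⟩
end Dial
end

section
/- Let (B,F) be a display map category with F-dependent coproducts, and let p: E → B be a fibration with fibred products along F. Then p is a dependent Hilbert τ-fibration (i.e., every object of p is (F,∏)-quantifier-free) if and only if for every object α ∈ E_I and every display map f: I ↠ J in F there uniquely exist an arrow τ_{α,f}: J → I in B and a vertical map τ̄_{α,f}: (τ_{α,f})*α → ∏_f α such that: (1) f ∘ τ_{α,f} = id_J; (2) id = τ̄_{α,f} ∘ (τ_{α,f})*(ε_α), where ε: f* ∏_f ⇒ id is the counit of the adjunction f* ⊣ ∏_f; and (3) whenever a vertical arrow u: ∏_g β → α decomposes as u = h ∘ t*(ε_β) for some vertical arrow h and some section t of g, then t = τ_{β,g} and h = u ∘ τ̄_{β,g}. -/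
/-!
Quantifier-freeness of every object amounts to quantifier splitting of every object, since
`𝟙* α ≅ α`. Splitting the identity of `∏_f α` along `f` produces exactly the data `(τ, τ̄)` with
condition (2), and uniqueness of that splitting is condition (3). Conversely, `(τ, τ̄ ≫ h)` splits
any `h : ∏_u β ⟶ γ`, uniquely by (3). Uniqueness of the τ-family holds because condition (3) of
one good family, applied to the identity of `∏_f α`, recovers the data of any other.
-/

open CategoryTheory CategoryTheory.Limits

universe w₂ w₁ v u

namespace Dial

variable {B : Type u} [Category.{v} B]

/-- A family of Hilbert τ-data: for every `α` over `I` and display map `f : I ⟶ J`,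
a section `τ` of `f` together with a vertical map `τ* α ⟶ ∏_f α`. -/
def TauFamily (D : DisplayStruct B) (p : IndexedCat.{w₂, w₁} B) (P : FProducts D p) :
    Type _ :=
  ∀ (I J : B) (f : I ⟶ J) (hf : D.F f) (α : p.Fib I),
    Σ' (s : J ⟶ I) (_ : s ≫ f = 𝟙 J), ((p.reindex s).obj α ⟶ (P.Pi f hf).obj α)

/-- The conditions (2) and (3) of the characterisation of Hilbert τ-fibrations
(condition (1), `τ ≫ f = 𝟙`, is built into `TauFamily`). -/
def IsGoodTau {D : DisplayStruct B} {p : IndexedCat.{w₂, w₁} B} {P : FProducts D p}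
    (E : TauFamily D p P) : Prop :=
  (∀ (I J : B) (f : I ⟶ J) (hf : D.F f) (α : p.Fib I),
    counitSec p P f hf (E I J f hf α).1 (E I J f hf α).2.1 α ≫ (E I J f hf α).2.2 = 𝟙 _) ∧
  (∀ (I' A : B) (g : A ⟶ I') (hg : D.F g) (β : p.Fib A) (α' : p.Fib I')
    (u : (P.Pi g hg).obj β ⟶ α') (t : I' ⟶ A) (ht : t ≫ g = 𝟙 I')
    (h : (p.reindex t).obj β ⟶ α'),
    u = counitSec p P g hg t ht β ≫ h →
      ∃ hte : t = (E A I' g hg β).1,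
        h = eqToHom (by rw [hte]) ≫ (E A I' g hg β).2.2 ≫ u)

variable {D : DisplayStruct B} {p : IndexedCat.{w₂, w₁} B} {P : FProducts D p}

lemma section_factor_eq_iff {A A' : B} {u : A' ⟶ A} {β : p.Fib A'} {γ : p.Fib A}
    (x y : Σ' (g : A ⟶ A') (_ : g ≫ u = 𝟙 A), ((p.reindex g).obj β ⟶ γ)) :
    x = y ↔ ∃ e : x.1 = y.1, x.2.2 = eqToHom (by rw [e]) ≫ y.2.2 := by
  obtain ⟨g, hg, k⟩ := x
  obtain ⟨g', hg', k'⟩ := y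
  constructor
  · rintro ⟨⟩
    exact ⟨rfl, by simp⟩
  · rintro ⟨rfl : g = g', hk : k = eqToHom rfl ≫ k'⟩
    rw [eqToHom_refl, Category.id_comp] at hk
    subst hk
    rfl

lemma IsProdSplitting.of_iso {A : B} {α α' : p.Fib A} (e : α ≅ α')
    (hα : IsProdSplitting p P α) : IsProdSplitting p P α' := by
  intro A' u hu β h
  obtain ⟨⟨g, hg, k⟩, hk, huniq⟩ := hα u hu β (h ≫ e.inv)
  refine ⟨⟨g, hg, k ≫ e.hom⟩, ?_, ?_⟩
  · simpa [← Category.assoc, Iso.comp_inv_eq] using hk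
  · rintro ⟨g', hg', k'⟩ (hk' : h = _)
    have := huniq ⟨g', hg', k' ≫ e.inv⟩ (by simp [hk'])
    cases this
    simp

lemma forall_isProdFree_iff :
    (∀ (I : B) (α : p.Fib I), IsProdFree p P α) ↔
      ∀ (A : B) (γ : p.Fib A), IsProdSplitting p P γ :=
  ⟨fun H A γ => IsProdSplitting.of_iso ((p.reindexId A).app γ) (H A γ (𝟙 A)),
    fun H _ α _ f => H _ ((p.reindex f).obj α)⟩

section TauFamily

variable {E : TauFamily D p P}

def TauFamily.RetractsCounit (E : TauFamily D p P) : Prop :=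
  ∀ (I J : B) (f : I ⟶ J) (hf : D.F f) (α : p.Fib I),
    counitSec p P f hf (E I J f hf α).1 (E I J f hf α).2.1 α ≫ (E I J f hf α).2.2 = 𝟙 _

lemma TauFamily.RetractsCounit.counitSec_comp (hE : E.RetractsCounit) {I J : B} {f : I ⟶ J}
    {hf : D.F f} {α : p.Fib I} {γ : p.Fib J} (h : (P.Pi f hf).obj α ⟶ γ) :
    counitSec p P f hf (E I J f hf α).1 (E I J f hf α).2.1 α ≫ (E I J f hf α).2.2 ≫ h = h := by
  rw [← Category.assoc, hE, Category.id_comp]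

lemma IsGoodTau.isProdSplitting (hE : IsGoodTau E) {A : B} (γ : p.Fib A) :
    IsProdSplitting p P γ := by
  intro A' u hu β h
  refine ⟨⟨(E A' A u hu β).1, (E A' A u hu β).2.1, (E A' A u hu β).2.2 ≫ h⟩,
    (TauFamily.RetractsCounit.counitSec_comp hE.1 h).symm, ?_⟩
  rintro ⟨t, ht, k⟩ hk
  exact (section_factor_eq_iff _ _).2 (hE.2 A A' u hu β γ h t ht k hk)

lemma IsGoodTau.eq_of_retractsCounit (hE : IsGoodTau E) {E' : TauFamily D p P}
    (hE' : E'.RetractsCounit) : E' = E := by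
  funext I J f hf α
  obtain ⟨hτ, hτbar⟩ := hE.2 J I f hf α _ (𝟙 _) _ _ _ (hE' I J f hf α).symm
  exact (section_factor_eq_iff _ _).2 ⟨hτ, by simpa using hτbar⟩

end TauFamily

section Splitting

variable (hs : ∀ (A : B) (γ : p.Fib A), IsProdSplitting p P γ)

noncomputable def tauOfSplitting : TauFamily D p P :=
  fun _ J f hf α => (hs J _ f hf α (𝟙 _)).exists.choose

lemma retractsCounit_tauOfSplitting : (tauOfSplitting hs).RetractsCounit :=
  fun _ J f hf α => (hs J _ f hf α (𝟙 _)).exists.choose_spec.symm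

lemma isGoodTau_tauOfSplitting : IsGoodTau (tauOfSplitting hs) := by
  refine ⟨retractsCounit_tauOfSplitting hs, fun I' A g hg β α' u t ht h hu => ?_⟩
  let τ := tauOfSplitting hs A I' g hg β
  exact (section_factor_eq_iff _ _).1 <| (hs I' α' g hg β u).unique (y₁ := ⟨t, ht, h⟩)
    (y₂ := ⟨τ.1, τ.2.1, τ.2.2 ≫ u⟩) hu
    ((retractsCounit_tauOfSplitting hs).counitSec_comp u).symm

end Splitting

theorem hilbert_tau_characterisation_general (D : DisplayStruct B)
    (p : IndexedCat.{w₂, w₁} B) (P : FProducts D p) :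
    (∀ (I : B) (α : p.Fib I), IsProdFree p P α) ↔ ∃! E : TauFamily D p P, IsGoodTau E := by
  rw [forall_isProdFree_iff]
  constructor
  · intro hs
    exact ⟨tauOfSplitting hs, isGoodTau_tauOfSplitting hs,
      fun E' hE' => (isGoodTau_tauOfSplitting hs).eq_of_retractsCounit hE'.1⟩
  · rintro ⟨E, hE, -⟩ A γ
    exact hE.isProdSplitting γ

/-- STATEMENT 7: A fibration with fibred products along `F` (over a display map category
with `F`-dependent coproducts) is a dependent Hilbert τ-fibration, i.e. every object is
`(F, ∏)`-quantifier-free, if and only if there is a unique family of Hilbert τ-operators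
satisfying conditions (1), (2) and (3). -/
theorem hilbert_tau_characterisation (D : DisplayStruct B) (hco : D.HasDepCoproducts)
    (p : IndexedCat.{w₂, w₁} B) (P : FProducts D p) :
    (∀ (I : B) (α : p.Fib I), IsProdFree p P α) ↔ ∃! E : TauFamily D p P, IsGoodTau E :=
  hilbert_tau_characterisation_general D p P
end Dial
end

section
/- Let (B,F) be a display map category with F-dependent coproducts and p: E → B a dependent Hilbert τ-fibration. Then for every object α ∈ E_I and every display map f: I ↠ J in F, the vertical arrow τ̄_{α,f}: (τ_{α,f})*α → ∏_f α exists and is an isomorphism; in particular (τ_{α,f})*α ≅ ∏_f α. -/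
open CategoryTheory CategoryTheory.Limits

universe w₂ w₁ v u

namespace Dial

variable {B : Type u} [Category.{v} B]

/-- STATEMENT 8: In a dependent Hilbert τ-fibration, for every `α` over `I` and display map
`f : I ⟶ J` the (unique) Hilbert τ-data `(τ, τ̄)` exists and `τ̄ : τ* α ⟶ ∏_f α` is an
isomorphism. -/
theorem hilbert_tau_bar_isIso (D : DisplayStruct B) (hco : D.HasDepCoproducts)
    (p : IndexedCat.{w₂, w₁} B) (P : FProducts D p)
    (htau : ∀ (I : B) (α : p.Fib I), IsProdFree p P α) :
    ∀ (I J : B) (f : I ⟶ J) (hf : D.F f) (α : p.Fib I),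
      (∃ (s : J ⟶ I) (hs : s ≫ f = 𝟙 J)
        (bar : (p.reindex s).obj α ⟶ (P.Pi f hf).obj α),
          counitSec p P f hf s hs α ≫ bar = 𝟙 _) ∧
      (∀ (s : J ⟶ I) (hs : s ≫ f = 𝟙 J)
        (bar : (p.reindex s).obj α ⟶ (P.Pi f hf).obj α),
          counitSec p P f hf s hs α ≫ bar = 𝟙 _ → IsIso bar) := by
  intro I J f hf α
  constructor
  · obtain ⟨⟨s, hs, hbar⟩, heq, -⟩ :=
      htau J ((P.Pi f hf).obj α) (𝟙 J) f hf α
        ((p.reindexId J).inv.app ((P.Pi f hf).obj α))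
    refine ⟨s, hs, hbar ≫ (p.reindexId J).hom.app ((P.Pi f hf).obj α), ?_⟩
    rw [← Category.assoc, ← heq]
    simp
  · intro s hs bar hbar
    have h2 : bar ≫ counitSec p P f hf s hs α = 𝟙 _ := by
      obtain ⟨gh, hgh, huniq⟩ := htau I α s f hf α (counitSec p P f hf s hs α)
      have e1 := huniq ⟨s, hs, 𝟙 _⟩ (by simp)
      have e2 := huniq ⟨s, hs, bar ≫ counitSec p P f hf s hs α⟩ (by
        show counitSec p P f hf s hs α =
          counitSec p P f hf s hs α ≫ (bar ≫ counitSec p P f hf s hs α)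
        rw [← Category.assoc, hbar, Category.id_comp])
      have e3 := e1.trans e2.symm
      injection e3 with e4 e5
      injection e5 with e7 e8
      exact e8.symm
    exact ⟨⟨counitSec p P f hf s hs α, h2, hbar⟩⟩
end Dial
end

section
/- (Prenexation.) Let p: E → B be a dependent Gödel fibration over a display map category (B,F) with units. Then for every object A ∈ B and every α ∈ E_A there exist arrows f: C ↠ A and g: B ↠ C in F together with an element β ∈ E_B such that α ≅ ∐_f ∏_g β, where β is (F,∐)-quantifier-free in p and is (F,∏)-quantifier-free in the full subfibration p' of (F,∐)-quantifier-free elements of p. -/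
open CategoryTheory CategoryTheory.Limits

universe w₂ w₁ v u

namespace Dial

variable {B : Type u} [Category.{v} B]

/-- A dependent Skolem fibration over the display map category `(B, F)`. -/
structure SkolemFib (D : DisplayStruct B) (p : IndexedCat.{w₂, w₁} B) where
  depProds : D.HasDepProds
  C : FCoproducts D p
  P : FProducts D p
  enough : HasEnoughCoprodFree p C
  stab : ∀ {I J : B} (f : I ⟶ J) (hf : D.F f) (α : p.Fib I),
    IsCoprodFree p C α → IsCoprodFree p C ((P.Pi f hf).obj α)

/-- A dependent Gödel fibration: a dependent Skolem fibration whose full subfibration of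
`(F, ∐)`-quantifier-free objects has enough `(F, ∏)`-quantifier-free objects. -/
structure GodelFib (D : DisplayStruct B) (p : IndexedCat.{w₂, w₁} B) extends
    SkolemFib D p where
  enoughProdFree : ∀ {I : B} (α : p.Fib I), IsCoprodFree p C α →
    ∃ (A : B) (g : A ⟶ I) (hg : D.F g) (β : p.Fib A),
      IsCoprodFree p C β ∧
      IsProdFreeRel p P (fun _ γ => IsCoprodFree p C γ) β ∧
      Nonempty (α ≅ (P.Pi g hg).obj β)

/-- STATEMENT 12 (Prenexation): in a dependent Gödel fibration over a display map category
with units, every `α` over `A` can be written, up to vertical isomorphism, as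
`α ≅ ∐_f ∏_g β` with `f, g` display maps and `β` an object that is
`(F, ∐)`-quantifier-free in `p` and `(F, ∏)`-quantifier-free in the full subfibration `p'`
of `(F, ∐)`-quantifier-free objects. -/
theorem prenexation (D : DisplayStruct B) (hU : D.HasUnits)
    (p : IndexedCat.{w₂, w₁} B) (G : GodelFib D p) :
    ∀ (A : B) (α : p.Fib A),
      ∃ (Cc : B) (f : Cc ⟶ A) (hf : D.F f) (Bb : B) (g : Bb ⟶ Cc) (hg : D.F g)
        (β : p.Fib Bb),
        IsCoprodFree p G.C β ∧
        IsProdFreeRel p G.P (fun _ γ => IsCoprodFree p G.C γ) β ∧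
        Nonempty (α ≅ (G.C.Sig f hf).obj ((G.P.Pi g hg).obj β)) := by
  intro A α
  obtain ⟨Cc, f, hf, β', hβ', ⟨i⟩⟩ := G.enough α
  obtain ⟨Bb, g, hg, β, hcf, hpf, ⟨j⟩⟩ := G.enoughProdFree β' hβ'
  exact ⟨Cc, f, hf, Bb, g, hg, β, hcf, hpf, ⟨i ≪≫ (G.C.Sig f hf).mapIso j⟩⟩
end Dial
end
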